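/- arXiv:2009.04892 — 2 statements merged into one kernel-verified Lean document; each statement's English description precedes it below -/
import Mathlib

section
/- Let F be a t-repeated k-non-signaling function that is permutation folded and (1-ε)-consistent with k ≥ 2. Fix a query Q = (w_1,...,w_t) ∈ D^t, a query set S ⊆ D of size s ≤ t, and an index ℓ ≤ t such that w_1,...,w_ℓ are distinct and each w_j ∈ S for j ∈ [ℓ]. Then the distribution of (flat(F)_S(w_1),...,flat(F)_S(w_ℓ)) and the distribution of (F(Q)_1,...,F(Q)_ℓ) are ε-close in total variation distance. -/
noncomputable def prob {α : Type*} (p : PMF α) (E : Set α) : ℝ :=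
  (p.toOuterMeasure E).toReal

def restrictAssign {D A : Type*} {S T : Finset D} (h : T ⊆ S)
    (f : {x // x ∈ S} → A) : {x // x ∈ T} → A :=
  fun x => f ⟨x.1, h x.2⟩

noncomputable def marginal {D A : Type*} {S : Finset D} (p : PMF ({x // x ∈ S} → A))
    {T : Finset D} (h : T ⊆ S) : PMF ({x // x ∈ T} → A) :=
  p.map (restrictAssign h)

def IsNonSignaling {D A : Type*} [DecidableEq D] (k : ℕ)
    (F : (S : Finset D) → PMF ({x // x ∈ S} → A)) : Prop :=
  ∀ S T : Finset D, S.card ≤ k → T.card ≤ k →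
    marginal (F S) (Finset.inter_subset_left : S ∩ T ⊆ S) =
    marginal (F T) (Finset.inter_subset_right : S ∩ T ⊆ T)

/-- An `(ε, k)`-almost-non-signaling function: marginals on intersections of query
sets of size at most `k` are `ε`-close in total variation distance. -/
def IsAlmostNonSignaling {D A : Type*} [DecidableEq D] (ε : ℝ) (k : ℕ)
    (F : (S : Finset D) → PMF ({x // x ∈ S} → A)) : Prop :=
  ∀ S T : Finset D, S.card ≤ k → T.card ≤ k →
    ∀ E : Set ({x // x ∈ S ∩ T} → A),
      |prob (marginal (F S) (Finset.inter_subset_left : S ∩ T ⊆ S)) E -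
       prob (marginal (F T) (Finset.inter_subset_right : S ∩ T ⊆ T)) E| ≤ ε

def permQ {t : ℕ} {β : Type*} (π : Equiv.Perm (Fin t)) (Q : Fin t → β) : Fin t → β :=
  fun j => Q (π j)

def IsPermFolded {t : ℕ} {D A : Type*} [DecidableEq D] (k : ℕ)
    (F : (S : Finset (Fin t → D)) → PMF ({Q // Q ∈ S} → (Fin t → A))) : Prop :=
  ∀ (ℓ : ℕ) (Q : Fin ℓ → (Fin t → D)) (π : Fin ℓ → Equiv.Perm (Fin t))
    (b : Fin ℓ → (Fin t → A)), ℓ ≤ k →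
    prob (F (Finset.image Q Finset.univ))
      {f | ∀ i : Fin ℓ, f ⟨Q i, Finset.mem_image_of_mem _ (Finset.mem_univ i)⟩ = b i} =
    prob (F (Finset.image (fun i => permQ (π i) (Q i)) Finset.univ))
      {f | ∀ i : Fin ℓ, f ⟨permQ (π i) (Q i),
          Finset.mem_image_of_mem _ (Finset.mem_univ i)⟩ = permQ (π i) (b i)}

def IsConsistentRep {t : ℕ} {D A : Type*} [DecidableEq D] (ε : ℝ)
    (F : (S : Finset (Fin t → D)) → PMF ({Q // Q ∈ S} → (Fin t → A))) : Prop :=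
  ∀ Q Q' : Fin t → D,
    prob (F {Q, Q'})
      {f | ∀ j : Fin t, Q j = Q' j →
        f ⟨Q, by simp⟩ j = f ⟨Q', by simp⟩ j} ≥ 1 - ε

noncomputable def padVec {D : Type*} [Inhabited D] (t : ℕ) (S : Finset D) : Fin t → D :=
  fun j => if h : (j : ℕ) < S.toList.length then S.toList.get ⟨j, h⟩ else default

/-- The flattening of a `t`-repeated non-signaling function: a query set `S` is answered
via a single query to `F` on a vector whose first `S.card` coordinates enumerate `S`. -/
noncomputable def flatten {D A : Type*} [DecidableEq D] [Inhabited D] [Inhabited A] (t : ℕ)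
    (F : (S : Finset (Fin t → D)) → PMF ({Q // Q ∈ S} → (Fin t → A)))
    (S : Finset D) : PMF ({x // x ∈ S} → A) :=
  (F {padVec t S}).map (fun f x =>
    if h : S.toList.idxOf x.1 < t then
      f ⟨padVec t S, Finset.mem_singleton_self _⟩ ⟨S.toList.idxOf x.1, h⟩
    else default)

/-!
Enumerate `S` as `padVec t S`, so that `flat(F)_S(w_i)` is coordinate `idx i` of the answer
to the single query `padVec t S`, where `idx i` is the position of `w_i` in `S`. The positions
are distinct, so a permutation `π` of `Fin t` moves each `idx i` to `i`; by permutation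
folding the answer to the permuted query `P' = permQ π (padVec t S)` is the permuted answer,
and `P'` agrees with `Q` on the first `ℓ` coordinates. Non-signaling lets us read the answers to
`P'` and to `Q` off the joint answer to `{P', Q}`, where consistency makes them agree on those
coordinates except with probability `ε`.
-/

open Function Finset MeasureTheory

section Prob

variable {α β : Type*}

lemma prob_map (p : PMF α) (g : α → β) (E : Set β) :
    prob (p.map g) E = prob p (g ⁻¹' E) := by
  simp only [prob, PMF.toOuterMeasure_map_apply]

lemma prob_eq_toMeasure_real [MeasurableSpace α] [DiscreteMeasurableSpace α] (p : PMF α)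
    (E : Set α) : prob p E = p.toMeasure.real E := by
  rw [measureReal_def, p.toMeasure_apply_eq_toOuterMeasure_apply .of_discrete, prob]

lemma PMF.ext_prob_singleton {p q : PMF α} (h : ∀ a, prob p {a} = prob q {a}) : p = q :=
  PMF.ext fun a => by
    simpa only [prob, PMF.toOuterMeasure_apply_singleton,
      ENNReal.toReal_eq_toReal_iff' (p.apply_ne_top a) (q.apply_ne_top a)] using h a

lemma abs_prob_map_sub_le_of_eqOn (p : PMF α) {X Y : α → β} {C : Set α} (hXY : Set.EqOn X Y C)
    {ε : ℝ} (hC : 1 - ε ≤ prob p C) (E : Set β) :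
    |prob (p.map X) E - prob (p.map Y) E| ≤ ε := by
  let _ : MeasurableSpace α := ⊤
  have hCc : p.toMeasure.real Cᶜ ≤ ε := by
    rw [measureReal_compl .of_discrete, probReal_univ, ← prob_eq_toMeasure_real]
    linarith
  have key : ∀ {U V : α → β}, Set.EqOn U V C →
      p.toMeasure.real (U ⁻¹' E) ≤ p.toMeasure.real (V ⁻¹' E) + p.toMeasure.real Cᶜ :=
    fun hUV => (measureReal_mono fun a ha => by
      by_cases haC : a ∈ C
      · exact Or.inl (by rwa [Set.mem_preimage, ← hUV haC])
      · exact Or.inr haC).trans (measureReal_union_le _ _)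
  rw [prob_map, prob_map, prob_eq_toMeasure_real, prob_eq_toMeasure_real, abs_le]
  have := key hXY
  have := key hXY.symm
  constructor <;> linarith

end Prob

lemma exists_perm_apply_eq_of_injective {ι α : Type*} [Finite ι] {f g : ι → α}
    (hf : Injective f) (hg : Injective g) : ∃ π : Equiv.Perm α, ∀ i, π (f i) = g i := by
  classical
  let e : Set.range f ≃ Set.range g :=
    (Equiv.ofInjective f hf).symm.trans (Equiv.ofInjective g hg)
  have : Finite {x | x ∈ Set.range f} := (Set.finite_range f).to_subtype
  refine ⟨e.extendSubtype, fun i => ?_⟩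
  rw [e.extendSubtype_apply_of_mem (f i) ⟨i, rfl⟩]
  simp [e]

lemma permQ_bijective {t : ℕ} {β : Type*} (π : Equiv.Perm (Fin t)) :
    Bijective (permQ (β := β) π) :=
  ⟨fun a b h => funext fun j => by simpa [permQ] using congrFun h (π.symm j),
    fun c => ⟨permQ π.symm c, funext fun j => by simp [permQ]⟩⟩

section Flatten

variable {D : Type*} [DecidableEq D] {t : ℕ} {S : Finset D} {x : D}

lemma idxOf_toList_lt (hS : S.card ≤ t) (hx : x ∈ S) : S.toList.idxOf x < t :=
  (List.idxOf_lt_length_iff.mpr (mem_toList.mpr hx)).trans_le (S.length_toList ▸ hS)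

lemma padVec_idxOf [Inhabited D] (hS : S.card ≤ t) (hx : x ∈ S) :
    padVec t S ⟨S.toList.idxOf x, idxOf_toList_lt hS hx⟩ = x := by
  have hlt := List.idxOf_lt_length_iff.mpr (mem_toList.mpr hx)
  simp only [padVec, dif_pos hlt]
  exact List.idxOf_get hlt

end Flatten

noncomputable def answerLaw {β γ : Type*} (F : (S : Finset β) → PMF ({x // x ∈ S} → γ))
    (x : β) : PMF γ :=
  (F {x}).map (· ⟨x, mem_singleton_self x⟩)

-- Stated for any `S = {x}`: `IsPermFolded` speaks of `Finset.image (fun _ => x) univ`.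
lemma prob_answerLaw_singleton {β γ : Type*} (F : (S : Finset β) → PMF ({x // x ∈ S} → γ))
    {S : Finset β} {x : β} (hS : S = {x}) (hx : x ∈ S) (c : γ) :
    prob (answerLaw F x) {c} = prob (F S) {f | f ⟨x, hx⟩ = c} := by
  subst hS
  exact prob_map _ _ _

lemma IsNonSignaling.map_eval_eq_answerLaw {β γ : Type*} [DecidableEq β] {k : ℕ}
    {F : (S : Finset β) → PMF ({x // x ∈ S} → γ)} (hns : IsNonSignaling k F) (hk : 1 ≤ k)
    {T : Finset β} (hT : T.card ≤ k) {x : β} (hx : x ∈ T) :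
    (F T).map (· ⟨x, hx⟩) = answerLaw F x := by
  have h := congrArg (PMF.map (· ⟨x, mem_inter.mpr ⟨hx, mem_singleton_self x⟩⟩))
    (hns T {x} hT (by simpa using hk))
  rw [marginal, marginal, PMF.map_comp, PMF.map_comp] at h
  exact h

section Repeated

variable {t k : ℕ} {D A : Type*} [DecidableEq D]
  {F : (S : Finset (Fin t → D)) → PMF ({Q // Q ∈ S} → (Fin t → A))}

lemma IsPermFolded.answerLaw_permQ (hfold : IsPermFolded k F) (hk : 1 ≤ k)
    (π : Equiv.Perm (Fin t)) (x : Fin t → D) :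
    answerLaw F (permQ π x) = (answerLaw F x).map (permQ π) := by
  refine PMF.ext_prob_singleton fun c => ?_
  obtain ⟨b, rfl⟩ := (permQ_bijective π).surjective c
  have h := hfold 1 (fun _ => x) (fun _ => π) (fun _ => b) hk
  simp only [Fin.forall_fin_one] at h
  have hpre : permQ π ⁻¹' {permQ π b} = {b} :=
    Set.ext fun _ => (permQ_bijective π).injective.eq_iff
  rw [prob_map, hpre, prob_answerLaw_singleton F (image_const (univ_nonempty (α := Fin 1)) x),
    prob_answerLaw_singleton F (image_const (univ_nonempty (α := Fin 1)) (permQ π x))]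
  exact h.symm

lemma IsConsistentRep.abs_prob_answerLaw_map_sub_le {ε : ℝ} (hcons : IsConsistentRep ε F)
    (hns : IsNonSignaling k F) (hk : 2 ≤ k) {ι : Type*} (J : ι → Fin t) {x y : Fin t → D}
    (hJ : ∀ i, x (J i) = y (J i)) (E : Set (ι → A)) :
    |prob ((answerLaw F x).map (fun a i => a (J i))) E -
      prob ((answerLaw F y).map (fun a i => a (J i))) E| ≤ ε := by
  have hcard : ({x, y} : Finset (Fin t → D)).card ≤ k := card_le_two.trans hk
  rw [← hns.map_eval_eq_answerLaw (by omega) hcard (mem_insert_self x {y}),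
    ← hns.map_eval_eq_answerLaw (by omega) hcard (mem_insert_of_mem (mem_singleton_self y)),
    PMF.map_comp, PMF.map_comp]
  refine abs_prob_map_sub_le_of_eqOn _ ?_ (hcons x y) E
  exact fun f hf => funext fun i => hf (J i) (hJ i)

lemma flatten_map_eval [Inhabited D] [Inhabited A] {S : Finset D} (hS : S.card ≤ t)
    {ι : Type*} (w : ι → D) (hw : ∀ i, w i ∈ S) :
    (flatten t F S).map (fun f i => f ⟨w i, hw i⟩) =
      (answerLaw F (padVec t S)).map
        (fun a i => a ⟨S.toList.idxOf (w i), idxOf_toList_lt hS (hw i)⟩) := by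
  rw [flatten, answerLaw, PMF.map_comp, PMF.map_comp]
  congr 1
  funext f i
  exact dif_pos (idxOf_toList_lt hS (hw i))

end Repeated

/-- for a permutation-folded `(1-ε)`-consistent `t`-repeated
`k`-non-signaling function `F` (`k ≥ 2`), a query `Q = (w₁, …, w_t)`, a query set
`S` of size `≤ t`, and `ℓ ≤ t` with `w₁, …, w_ℓ` distinct and contained in `S`, the
distribution of `(flat(F)_S(w₁), …, flat(F)_S(w_ℓ))` and the distribution of
`(F(Q)₁, …, F(Q)_ℓ)` are `ε`-close in total variation distance. -/
theorem flatten_close_to_repeated {t k : ℕ} {D A : Type*}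
    [DecidableEq D] [Inhabited D] [Inhabited A]
    (F : (S : Finset (Fin t → D)) → PMF ({Q // Q ∈ S} → (Fin t → A)))
    (hk : 2 ≤ k)
    (hns : IsNonSignaling k F)
    (hfold : IsPermFolded k F)
    (ε : ℝ)
    (hcons : IsConsistentRep ε F)
    (Q : Fin t → D) (S : Finset D) (hS : S.card ≤ t)
    (ℓ : ℕ) (hℓ : ℓ ≤ t)
    (hinj : ∀ i j : Fin ℓ, Q (Fin.castLE hℓ i) = Q (Fin.castLE hℓ j) → i = j)
    (hmem : ∀ i : Fin ℓ, Q (Fin.castLE hℓ i) ∈ S) :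
    ∀ E : Set (Fin ℓ → A),
      |prob ((flatten t F S).map (fun f (i : Fin ℓ) =>
          f ⟨Q (Fin.castLE hℓ i), hmem i⟩)) E -
       prob ((F {Q}).map (fun f (i : Fin ℓ) =>
          f ⟨Q, Finset.mem_singleton_self _⟩ (Fin.castLE hℓ i))) E| ≤ ε := by
  intro E
  let idx : Fin ℓ → Fin t := fun i =>
    ⟨S.toList.idxOf (Q (Fin.castLE hℓ i)), idxOf_toList_lt hS (hmem i)⟩
  have hidx : ∀ i, padVec t S (idx i) = Q (Fin.castLE hℓ i) := fun i =>
    padVec_idxOf hS (hmem i)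
  obtain ⟨π, hπ⟩ := exists_perm_apply_eq_of_injective (Fin.castLE_injective hℓ) (g := idx)
    fun i j h => hinj i j (by rw [← hidx, ← hidx, h])
  have hflat : (flatten t F S).map (fun f (i : Fin ℓ) => f ⟨Q (Fin.castLE hℓ i), hmem i⟩) =
      (answerLaw F (permQ π (padVec t S))).map (fun a i => a (Fin.castLE hℓ i)) := by
    rw [flatten_map_eval hS, hfold.answerLaw_permQ (by omega), PMF.map_comp]
    congr 1
    funext a i
    exact congrArg a (hπ i).symm
  have hrep :
      (F {Q}).map (fun f (i : Fin ℓ) => f ⟨Q, mem_singleton_self _⟩ (Fin.castLE hℓ i)) =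
      (answerLaw F Q).map (fun a i => a (Fin.castLE hℓ i)) := by
    rw [answerLaw, PMF.map_comp]
    rfl
  rw [hflat, hrep]
  exact hcons.abs_prob_answerLaw_map_sub_le hns hk _ (fun i => by simp only [permQ, hπ, hidx]) E
end

section
/- Self-correction converts average-case linearity into worst-case linearity: let F be a 2t-repeated k-non-signaling function from ({0,1}^n)^{2t} to ({0,1})^{2t} with k ≥ 7 that passes the linearity test with probability at least 1-ε, i.e., for uniformly random X, Y ∈ ({0,1}^n)^{2t}, Pr[F(X) + F(Y) = F(X+Y)] ≥ 1-ε. Then the self-correction F̂ is (1-4ε)-linear: for every X, Y ∈ ({0,1}^n)^t, Pr[F̂(X) + F̂(Y) = F̂(X+Y)] ≥ 1-4ε. -/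
/-- A `2t`-repeated non-signaling function over `{0,1}^n`. -/
abbrev NSFam (n t : ℕ) :=
  (S : Finset (Fin t → Fin n → ZMod 2)) → PMF ({Q // Q ∈ S} → (Fin t → ZMod 2))

/-- Acceptance probability of the linearity test: sample uniform `X, Y`, query `F` on
`{X, Y, X+Y}` and check `F(X) + F(Y) = F(X+Y)` in all coordinates. -/
noncomputable def linTestAccept {n t : ℕ} (F : NSFam n t) : ℝ :=
  prob ((PMF.uniformOfFintype ((Fin t → Fin n → ZMod 2) × (Fin t → Fin n → ZMod 2))).bind
    fun p => (F {p.1, p.2, p.1 + p.2}).map fun f =>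
      (f ⟨p.1, by simp⟩, f ⟨p.2, by simp⟩, f ⟨p.1 + p.2, by simp⟩))
    {y | y.1 + y.2.1 = y.2.2}

/-- Acceptance probability of the consistency test on a `2t`-repeated function: sample
uniform `W, Z₁, Z₂`, query `F` on `{[W;Z₁], [W;Z₂]}` and check that the answers agree
on the first `t` coordinates. -/
noncomputable def consTestAccept {n t : ℕ} (F : NSFam n (t + t)) : ℝ :=
  prob ((PMF.uniformOfFintype ((Fin t → Fin n → ZMod 2) × (Fin t → Fin n → ZMod 2) ×
      (Fin t → Fin n → ZMod 2))).bind
    fun w => (F {Fin.append w.1 w.2.1, Fin.append w.1 w.2.2}).map fun f =>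
      (f ⟨Fin.append w.1 w.2.1, by simp⟩, f ⟨Fin.append w.1 w.2.2, by simp⟩))
    {y : (Fin (t + t) → ZMod 2) × (Fin (t + t) → ZMod 2) |
      ∀ j : Fin t, y.1 (Fin.castAdd t j) = y.2 (Fin.castAdd t j)}

/-- The self-correction of a `2t`-repeated non-signaling function: a query `Q` is
answered by sampling fresh independent uniform `R, W`, querying `F` on
`{[R;W], [Q+R;W]}`, and returning the first `t` coordinates of
`F([R;W]) + F([Q+R;W])`. -/
noncomputable def selfCorrect {n t : ℕ} (F : NSFam n (t + t)) : NSFam n t :=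
  fun S =>
    (PMF.uniformOfFintype (({Q // Q ∈ S} → (Fin t → Fin n → ZMod 2)) ×
        ({Q // Q ∈ S} → (Fin t → Fin n → ZMod 2)))).bind fun RW =>
      (F (Finset.univ.biUnion fun Q : {Q // Q ∈ S} =>
          {Fin.append (RW.1 Q) (RW.2 Q), Fin.append (Q.1 + RW.1 Q) (RW.2 Q)})).map
        fun f Q j =>
          f ⟨Fin.append (RW.1 Q) (RW.2 Q),
              Finset.mem_biUnion.mpr ⟨Q, Finset.mem_univ _, Finset.mem_insert_self _ _⟩⟩
            (Fin.castAdd t j)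
          + f ⟨Fin.append (Q.1 + RW.1 Q) (RW.2 Q),
              Finset.mem_biUnion.mpr ⟨Q, Finset.mem_univ _,
                Finset.mem_insert_of_mem (Finset.mem_singleton_self _)⟩⟩
            (Fin.castAdd t j)

/-!
Write `a_Q = [R_Q; W_Q]` and `b_Q = [Q + R_Q; W_Q]`, so that over `𝔽₂` the corrected answer is
`F̂(Q) = F(b_Q) - F(a_Q)` and `b_X + b_Y + a_{X+Y} = a_X + a_Y + b_{X+Y}`. Linearity of `F` on the
four pairs `(a_X, a_Y)`, `(b_X, b_Y)`, `(a_X + a_Y, b_{X+Y})`, `(b_X + b_Y, a_{X+Y})` forces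
`F̂(X) + F̂(Y) = F̂(X+Y)`. A non-signaling `F` has no joint distribution on all the points involved,
so the four tests are chained through three query sets of size at most `7`, marginal consistency
carrying the remaining event from one set to the next. When `X`, `Y`, `X + Y` are distinct each of
the four pairs is uniformly distributed, so each test fails with probability at most `ε`;
otherwise `F̂(0) = 0` and the identity holds surely.
-/

open scoped ENNReal

namespace PMF

variable {α β γ : Type*}

theorem toOuterMeasure_add_compl (p : PMF α) (s : Set α) :
    p.toOuterMeasure s + p.toOuterMeasure sᶜ = 1 := by
  simp only [toOuterMeasure_apply]
  rw [← ENNReal.tsum_add, ← p.tsum_coe, ← Pi.add_def, Set.indicator_self_add_compl]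

theorem toOuterMeasure_ne_top (p : PMF α) (s : Set α) : p.toOuterMeasure s ≠ ∞ := by
  rw [toOuterMeasure_apply]
  exact p.tsum_coe_indicator_ne_top s

theorem tsum_mul_toOuterMeasure_comp (p : PMF α) (φ : α → β) (q : β → PMF γ) (s : Set γ) :
    ∑' a, p a * (q (φ a)).toOuterMeasure s = ((p.map φ).bind q).toOuterMeasure s := by
  rw [bind_map, toOuterMeasure_bind_apply]
  rfl

variable [Fintype α] [Fintype β] [Fintype γ] [Nonempty α] [Nonempty β] [Nonempty γ]

theorem map_uniformOfFintype_equiv (e : α ≃ β) :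
    (uniformOfFintype α).map e = uniformOfFintype β := by
  classical
  ext b
  simp only [map_apply, uniformOfFintype_apply, tsum_fintype, Fintype.card_congr e]
  rw [e.sum_comp fun b' => if b = b' then _ else 0]
  simp

theorem map_fst_uniformOfFintype :
    (uniformOfFintype (β × γ)).map Prod.fst = uniformOfFintype β := by
  classical
  ext b
  simp only [map_apply, uniformOfFintype_apply, tsum_fintype, Fintype.sum_prod_type]
  rw [Finset.sum_comm]
  simp only [Finset.sum_ite_eq, Finset.mem_univ, if_true, Finset.sum_const, Finset.card_univ,
    nsmul_eq_mul, Fintype.card_prod, Nat.cast_mul]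
  rw [ENNReal.mul_inv (by simp) (by simp), mul_left_comm,
    ENNReal.mul_inv_cancel (by simp) (by simp), mul_one]

theorem map_uniformOfFintype_of_equiv_prod (e : α ≃ β × γ) {f : α → β}
    (hf : ∀ a, (e a).1 = f a) : (uniformOfFintype α).map f = uniformOfFintype β := by
  rw [show f = Prod.fst ∘ e from funext fun a => (hf a).symm, ← map_comp,
    map_uniformOfFintype_equiv, map_fst_uniformOfFintype]

variable {H : Type*} [AddGroup H] [Fintype H]

theorem map_uniformOfFintype_add_add (u v : H) :
    (uniformOfFintype (H × H × H)).map (fun h => (h.1 + u, h.2.1 + v)) =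
      uniformOfFintype (H × H) :=
  map_uniformOfFintype_of_equiv_prod
    { toFun h := ((h.1 + u, h.2.1 + v), h.2.2)
      invFun p := (p.1.1 - u, p.1.2 - v, p.2)
      left_inv h := by simp
      right_inv p := by simp } fun _ => rfl

theorem map_uniformOfFintype_add_add_add (u v w : H) :
    (uniformOfFintype (H × H × H)).map (fun h => (h.1 + u + (h.2.1 + v), h.2.2 + w)) =
      uniformOfFintype (H × H) :=
  map_uniformOfFintype_of_equiv_prod
    { toFun h := ((h.1 + u + (h.2.1 + v), h.2.2 + w), h.2.1)
      invFun p := (p.1.1 - (p.2 + v) - u, p.2, p.1.2 - w)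
      left_inv h := by simp
      right_inv p := by simp } fun _ => rfl

end PMF

theorem prob_add_prob_compl {α : Type*} (p : PMF α) (s : Set α) :
    prob p s + prob p sᶜ = 1 := by
  unfold prob
  rw [← ENNReal.toReal_add (p.toOuterMeasure_ne_top _) (p.toOuterMeasure_ne_top _),
    p.toOuterMeasure_add_compl, ENNReal.toReal_one]

open PMF Finset

theorem Fin.append_add_append {M : Type*} [Add M] {m n : ℕ} (a b : Fin m → M)
    (c d : Fin n → M) : Fin.append a c + Fin.append b d = Fin.append (a + b) (c + d) := by
  funext i
  refine Fin.addCases (fun i => ?_) (fun i => ?_) i <;> simp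

def tripleArrowEquiv {D B : Type*} [DecidableEq D] {x y z : D} (hxy : x ≠ y) (hxz : x ≠ z)
    (hyz : y ≠ z) : ({q // q ∈ ({x, y, z} : Finset D)} → B) ≃ B × B × B where
  toFun f := (f ⟨x, by simp⟩, f ⟨y, by simp⟩, f ⟨z, by simp⟩)
  invFun v q := if q.1 = x then v.1 else if q.1 = y then v.2.1 else v.2.2
  left_inv f := by
    ext ⟨q, hq⟩
    simp only [mem_insert, mem_singleton] at hq
    rcases hq with rfl | rfl | rfl <;> simp [hxy.symm, hxz.symm, hyz.symm]
  right_inv v := by simp [hxy.symm, hxz.symm, hyz.symm]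

section NonSignaling

variable {D A : Type*} [DecidableEq D] [Zero A]

/-- Answers on different query sets are compared by extending them by zero to all of `D`; for a
`k`-non-signaling `F`, an event that reads only the coordinates in `T` then has the same
probability under `F S` for every `S ⊇ T` of size at most `k`. -/
def extendAssign {S : Finset D} (f : {x // x ∈ S} → A) (x : D) : A :=
  if h : x ∈ S then f ⟨x, h⟩ else 0

theorem extendAssign_of_mem {S : Finset D} (f : {x // x ∈ S} → A) {x : D} (hx : x ∈ S) :
    extendAssign f x = f ⟨x, hx⟩ :=
  dif_pos hx

theorem extendAssign_restrictAssign {S T : Finset D} (h : T ⊆ S) (f : {x // x ∈ S} → A)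
    {x : D} (hx : x ∈ T) : extendAssign (restrictAssign h f) x = extendAssign f x := by
  simp [extendAssign, restrictAssign, hx, h hx]

noncomputable def eventProb (F : (S : Finset D) → PMF ({x // x ∈ S} → A)) (S : Finset D)
    (P : (D → A) → Prop) : ℝ≥0∞ :=
  (F S).toOuterMeasure {f | P (extendAssign f)}

variable {F : (S : Finset D) → PMF ({x // x ∈ S} → A)} {S T : Finset D}
  {P Q R : (D → A) → Prop}

theorem toOuterMeasure_marginal_extendAssign (p : PMF ({x // x ∈ S} → A)) (h : T ⊆ S)
    (hP : DependsOn P T) :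
    (marginal p h).toOuterMeasure {f | P (extendAssign f)} =
      p.toOuterMeasure {f | P (extendAssign f)} := by
  rw [marginal, toOuterMeasure_map_apply]
  congr 1
  ext f
  exact Iff.of_eq (hP fun x hx => extendAssign_restrictAssign h f hx)

theorem IsNonSignaling.eventProb_eq {k : ℕ} (hns : IsNonSignaling k F) (hTS : T ⊆ S)
    (hS : #S ≤ k) (hP : DependsOn P T) : eventProb F S P = eventProb F T P := by
  have hP' : DependsOn P ↑(S ∩ T) := by rwa [inter_eq_right.mpr hTS]
  unfold eventProb
  rw [← toOuterMeasure_marginal_extendAssign (F S) inter_subset_left hP',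
    hns S T hS ((card_le_card hTS).trans hS), toOuterMeasure_marginal_extendAssign _ _ hP']

theorem IsNonSignaling.eventProb_congr {k : ℕ} (hns : IsNonSignaling k F) {S₁ S₂ : Finset D}
    (h₁ : T ⊆ S₁) (h₂ : T ⊆ S₂) (hS₁ : #S₁ ≤ k) (hS₂ : #S₂ ≤ k) (hP : DependsOn P T) :
    eventProb F S₁ P = eventProb F S₂ P := by
  rw [hns.eventProb_eq h₁ hS₁ hP, hns.eventProb_eq h₂ hS₂ hP]

theorem eventProb_le_add (h : ∀ g, P g → Q g ∨ R g) :
    eventProb F S P ≤ eventProb F S Q + eventProb F S R :=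
  (MeasureTheory.measure_mono fun _ hf => h _ hf).trans (MeasureTheory.measure_union_le _ _)

end NonSignaling

section LinearityTest

variable {D A : Type*} [DecidableEq D] [Add D] [AddCommGroup A]
  (F : (S : Finset D) → PMF ({x // x ∈ S} → A))

noncomputable def linTestAnswers (p : D × D) : PMF (A × A × A) :=
  (F {p.1, p.2, p.1 + p.2}).map fun f =>
    (f ⟨p.1, by simp⟩, f ⟨p.2, by simp⟩, f ⟨p.1 + p.2, by simp⟩)

noncomputable def linTestFail (p : D × D) : ℝ≥0∞ :=
  eventProb F {p.1, p.2, p.1 + p.2} fun g => g p.1 + g p.2 ≠ g (p.1 + p.2)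

theorem toOuterMeasure_linTestAnswers_compl (p : D × D) :
    (linTestAnswers F p).toOuterMeasure {y | y.1 + y.2.1 = y.2.2}ᶜ = linTestFail F p := by
  rw [linTestAnswers, toOuterMeasure_map_apply]
  congr 1
  ext f
  simp [extendAssign]

theorem tsum_uniformOfFintype_mul_linTestFail [Fintype D] [Nonempty D] {Ω : Type*} [Fintype Ω]
    [Nonempty Ω] {φ : Ω → D × D} (hφ : (uniformOfFintype Ω).map φ = uniformOfFintype (D × D)) :
    ∑' ω, uniformOfFintype Ω ω * linTestFail F (φ ω) =
      ((uniformOfFintype (D × D)).bind (linTestAnswers F)).toOuterMeasure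
        {y | y.1 + y.2.1 = y.2.2}ᶜ := by
  simp_rw [← toOuterMeasure_linTestAnswers_compl, tsum_mul_toOuterMeasure_comp, hφ]

variable {F}

theorem IsNonSignaling.eventProb_sub_add_sub_ne_le {k : ℕ} (hns : IsNonSignaling k F)
    (hk : 7 ≤ k) {S : Finset D} (hS : #S ≤ 6) {a₁ b₁ a₂ b₂ c d : D}
    (hsub : {a₁, b₁, a₂, b₂, c, d} ⊆ S) (hsum : b₁ + b₂ + c = a₁ + a₂ + d) :
    eventProb F S (fun g => g b₁ - g a₁ + (g b₂ - g a₂) ≠ g d - g c) ≤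
      linTestFail F (a₁, a₂) + linTestFail F (b₁, b₂) + linTestFail F (a₁ + a₂, d) +
        linTestFail F (b₁ + b₂, c) := by
  set T₁ := insert (a₁ + a₂) S
  set T₂ : Finset D := {a₁ + a₂, b₁, b₂, b₁ + b₂, c, d}
  set T₃ : Finset D := {a₁ + a₂, d, a₁ + a₂ + d, b₁ + b₂, c}
  have hS' : #S ≤ k := by omega
  have hT₁ : #T₁ ≤ k := (card_insert_le _ _).trans (by omega)
  have hT₂ : #T₂ ≤ k := card_le_six.trans (by omega)
  have hT₃ : #T₃ ≤ k := card_le_five.trans (by omega)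
  simp only [insert_subset_iff, singleton_subset_iff] at hsub
  obtain ⟨ha₁, hb₁, ha₂, hb₂, hc, hd⟩ := hsub
  calc eventProb F S (fun g => g b₁ - g a₁ + (g b₂ - g a₂) ≠ g d - g c)
      = eventProb F T₁ (fun g => g b₁ - g a₁ + (g b₂ - g a₂) ≠ g d - g c) :=
        hns.eventProb_congr (T := {a₁, b₁, a₂, b₂, c, d}) (by simp [insert_subset_iff, *])
          (by simp [T₁, insert_subset_iff, *]) hS' hT₁
          (fun g g' h => by simp (disch := simp) only [h])
    _ ≤ eventProb F T₁ (fun g => g a₁ + g a₂ ≠ g (a₁ + a₂)) +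
          eventProb F T₁ (fun g => g b₁ + g b₂ - g (a₁ + a₂) ≠ g d - g c) :=
        eventProb_le_add fun g h₀ => by
          by_contra! h
          exact h₀ (by rw [← h.2, ← h.1]; abel)
    _ = linTestFail F (a₁, a₂) +
          eventProb F T₂ (fun g => g b₁ + g b₂ - g (a₁ + a₂) ≠ g d - g c) := by
        congr 1
        · exact hns.eventProb_eq (by simp [T₁, insert_subset_iff, *]) hT₁
            (fun g g' h => by simp (disch := simp) only [h])
        · exact hns.eventProb_congr (T := {a₁ + a₂, b₁, b₂, c, d})
            (by simp [T₁, insert_subset_iff, *]) (by simp [T₂, insert_subset_iff]) hT₁ hT₂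
            (fun g g' h => by simp (disch := simp) only [h])
    _ ≤ linTestFail F (a₁, a₂) + (eventProb F T₂ (fun g => g b₁ + g b₂ ≠ g (b₁ + b₂)) +
          eventProb F T₂ (fun g => g (b₁ + b₂) - g (a₁ + a₂) ≠ g d - g c)) := by
        gcongr
        refine eventProb_le_add fun g h₀ => ?_
        by_contra! h
        exact h₀ (by rw [h.1, h.2])
    _ = linTestFail F (a₁, a₂) + (linTestFail F (b₁, b₂) +
          eventProb F T₃ (fun g => g (b₁ + b₂) - g (a₁ + a₂) ≠ g d - g c)) := by
        congr 2
        · exact hns.eventProb_eq (by simp [T₂, insert_subset_iff]) hT₂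
            (fun g g' h => by simp (disch := simp) only [h])
        · exact hns.eventProb_congr (T := {a₁ + a₂, b₁ + b₂, c, d})
            (by simp [T₂, insert_subset_iff]) (by simp [T₃, insert_subset_iff]) hT₂ hT₃
            (fun g g' h => by simp (disch := simp) only [h])
    _ ≤ linTestFail F (a₁, a₂) + (linTestFail F (b₁, b₂) +
          (eventProb F T₃ (fun g => g (a₁ + a₂) + g d ≠ g (a₁ + a₂ + d)) +
            eventProb F T₃ (fun g => g (b₁ + b₂) + g c ≠ g (b₁ + b₂ + c)))) := by
        gcongr
        refine eventProb_le_add fun g h₀ => ?_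
        by_contra! h
        rw [hsum] at h
        exact h₀ (by rw [eq_sub_of_add_eq h.1, eq_sub_of_add_eq h.2]; abel)
    _ = linTestFail F (a₁, a₂) + (linTestFail F (b₁, b₂) +
          (linTestFail F (a₁ + a₂, d) + linTestFail F (b₁ + b₂, c))) := by
        congr 3
        · exact hns.eventProb_eq (by simp [T₃, insert_subset_iff]) hT₃
            (fun g g' h => by simp (disch := simp) only [h])
        · exact hns.eventProb_eq (by simp [T₃, insert_subset_iff, hsum]) hT₃
            (fun g g' h => by simp (disch := simp) only [h])
    _ = _ := by ring

end LinearityTest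

section SelfCorrection

variable {n t : ℕ} (S : Finset (Fin t → Fin n → ZMod 2))
  (RW : ({Q // Q ∈ S} → Fin t → Fin n → ZMod 2) × ({Q // Q ∈ S} → Fin t → Fin n → ZMod 2))

def correctorQueries : Finset (Fin (t + t) → Fin n → ZMod 2) :=
  univ.biUnion fun Q : {Q // Q ∈ S} =>
    {Fin.append (RW.1 Q) (RW.2 Q), Fin.append (Q.1 + RW.1 Q) (RW.2 Q)}

def correctorPoint (Q : {Q // Q ∈ S}) : Fin (t + t) → Fin n → ZMod 2 :=
  Fin.append (RW.1 Q) (RW.2 Q)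

theorem correctorPoint_add (Q : {Q // Q ∈ S}) :
    correctorPoint S RW Q + Fin.append Q.1 0 = Fin.append (Q.1 + RW.1 Q) (RW.2 Q) := by
  rw [correctorPoint, Fin.append_add_append, add_comm (RW.1 Q), add_zero]

theorem correctorPoint_mem_correctorQueries (Q : {Q // Q ∈ S}) :
    correctorPoint S RW Q ∈ correctorQueries S RW :=
  mem_biUnion.2 ⟨Q, mem_univ _, mem_insert_self _ _⟩

theorem append_add_mem_correctorQueries (Q : {Q // Q ∈ S}) :
    Fin.append (Q.1 + RW.1 Q) (RW.2 Q) ∈ correctorQueries S RW :=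
  mem_biUnion.2 ⟨Q, mem_univ _, mem_insert_of_mem (mem_singleton_self _)⟩

theorem correctorPoint_add_mem_correctorQueries (Q : {Q // Q ∈ S}) :
    correctorPoint S RW Q + Fin.append Q.1 0 ∈ correctorQueries S RW := by
  rw [correctorPoint_add]
  exact append_add_mem_correctorQueries S RW Q

theorem card_correctorQueries_le : #(correctorQueries S RW) ≤ 2 * #S := by
  refine card_biUnion_le.trans ?_
  calc ∑ _ : {Q // Q ∈ S}, _ ≤ ∑ _ : {Q // Q ∈ S}, 2 := sum_le_sum fun _ _ => card_le_two
    _ = 2 * #S := by simp [mul_comm]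

def correctorAnswers (f : {x // x ∈ correctorQueries S RW} → Fin (t + t) → ZMod 2)
    (Q : {Q // Q ∈ S}) (j : Fin t) : ZMod 2 :=
  f ⟨Fin.append (RW.1 Q) (RW.2 Q), correctorPoint_mem_correctorQueries S RW Q⟩ (Fin.castAdd t j) +
    f ⟨_, append_add_mem_correctorQueries S RW Q⟩ (Fin.castAdd t j)

theorem selfCorrect_eq_bind (F : NSFam n (t + t)) :
    selfCorrect F S = (uniformOfFintype _).bind fun RW =>
      (F (correctorQueries S RW)).map (correctorAnswers S RW) :=
  rfl

theorem correctorAnswers_eq_sub (f : {x // x ∈ correctorQueries S RW} → Fin (t + t) → ZMod 2)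
    (Q : {Q // Q ∈ S}) (j : Fin t) :
    correctorAnswers S RW f Q j =
      (extendAssign f (correctorPoint S RW Q + Fin.append Q.1 0) -
        extendAssign f (correctorPoint S RW Q)) (Fin.castAdd t j) := by
  rw [Pi.sub_apply, CharTwo.sub_eq_add, add_comm,
    extendAssign_of_mem _ (correctorPoint_mem_correctorQueries S RW Q),
    extendAssign_of_mem _ (correctorPoint_add_mem_correctorQueries S RW Q)]
  simp only [correctorAnswers, correctorPoint_add]
  rfl

variable {S} {F : NSFam n (t + t)}

theorem selfCorrect_apply_zero {f} (hf : f ∈ (selfCorrect F S).support) (h0 : 0 ∈ S) :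
    f ⟨0, h0⟩ = 0 := by
  simp only [selfCorrect_eq_bind, support_bind, support_map, Set.mem_iUnion, Set.mem_image] at hf
  obtain ⟨RW, -, f', -, rfl⟩ := hf
  funext j
  simp only [correctorAnswers, zero_add, CharTwo.add_self_eq_zero, Pi.zero_apply]

theorem prob_selfCorrect_eq_one_of_degenerate {X Y : Fin t → Fin n → ZMod 2}
    (h : X = 0 ∨ Y = 0 ∨ X = Y) :
    prob (selfCorrect F {X, Y, X + Y})
      {f | ∀ j : Fin t, f ⟨X, by simp⟩ j + f ⟨Y, by simp⟩ j = f ⟨X + Y, by simp⟩ j} = 1 := by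
  rw [prob, (toOuterMeasure_apply_eq_one_iff _ _).2, ENNReal.toReal_one]
  intro f hf j
  rcases h with rfl | rfl | rfl
  · simp only [zero_add, selfCorrect_apply_zero hf, Pi.zero_apply]
  · simp only [add_zero, selfCorrect_apply_zero hf, Pi.zero_apply]
  · have hXX : X + X = 0 := funext fun _ => funext fun _ => CharTwo.add_self_eq_zero _
    simp only [hXX, selfCorrect_apply_zero hf, Pi.zero_apply, CharTwo.add_self_eq_zero]

theorem IsNonSignaling.toOuterMeasure_map_correctorAnswers_compl_le {k : ℕ}
    (hns : IsNonSignaling k F) (hk : 7 ≤ k) (hS : #S ≤ 3) (x y z : {Q // Q ∈ S})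
    (hz : z.1 = x.1 + y.1) :
    ((F (correctorQueries S RW)).map (correctorAnswers S RW)).toOuterMeasure
        {f | ∀ j, f x j + f y j = f z j}ᶜ ≤
      linTestFail F (correctorPoint S RW x, correctorPoint S RW y) +
        linTestFail F (correctorPoint S RW x + Fin.append x.1 0,
          correctorPoint S RW y + Fin.append y.1 0) +
        linTestFail F (correctorPoint S RW x + correctorPoint S RW y,
          correctorPoint S RW z + Fin.append z.1 0) +
        linTestFail F (correctorPoint S RW x + Fin.append x.1 0 +
          (correctorPoint S RW y + Fin.append y.1 0), correctorPoint S RW z) := by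
  have hmem := correctorPoint_mem_correctorQueries S RW
  have hmem' := correctorPoint_add_mem_correctorQueries S RW
  have hι : Fin.append (x.1 + y.1) (0 : Fin t → Fin n → ZMod 2) =
      Fin.append x.1 0 + Fin.append y.1 0 := by
    rw [Fin.append_add_append, add_zero]
  rw [toOuterMeasure_map_apply]
  refine (MeasureTheory.measure_mono ?_).trans
    (hns.eventProb_sub_add_sub_ne_le hk ((card_correctorQueries_le S RW).trans (by omega))
      (by simp [insert_subset_iff, hmem, hmem']) (by rw [hz, hι]; abel))
  intro f hf hP
  refine hf fun j => ?_
  simpa [correctorAnswers_eq_sub] using congrFun hP (Fin.castAdd t j)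

def correctorPointsEquiv {X Y Z : Fin t → Fin n → ZMod 2} (hXY : X ≠ Y) (hXZ : X ≠ Z)
    (hYZ : Y ≠ Z) :
    (({Q // Q ∈ ({X, Y, Z} : Finset _)} → Fin t → Fin n → ZMod 2) ×
        ({Q // Q ∈ ({X, Y, Z} : Finset _)} → Fin t → Fin n → ZMod 2)) ≃
      (Fin (t + t) → Fin n → ZMod 2) × (Fin (t + t) → Fin n → ZMod 2) ×
        (Fin (t + t) → Fin n → ZMod 2) :=
  (Equiv.arrowProdEquivProdArrow _ _ _).symm.trans <|
    ((Equiv.refl _).arrowCongr (Fin.appendEquiv t t)).trans (tripleArrowEquiv hXY hXZ hYZ)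

theorem IsNonSignaling.toOuterMeasure_selfCorrect_compl_le {k : ℕ}
    (hns : IsNonSignaling k F) (hk : 7 ≤ k) {X Y : Fin t → Fin n → ZMod 2} (hX : X ≠ 0)
    (hY : Y ≠ 0) (hXY : X ≠ Y) :
    (selfCorrect F {X, Y, X + Y}).toOuterMeasure
        {f | ∀ j : Fin t, f ⟨X, by simp⟩ j + f ⟨Y, by simp⟩ j = f ⟨X + Y, by simp⟩ j}ᶜ ≤
      4 * ((uniformOfFintype _).bind (linTestAnswers F)).toOuterMeasure
        {y | y.1 + y.2.1 = y.2.2}ᶜ := by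
  let H := Fin (t + t) → Fin n → ZMod 2
  set T := ((uniformOfFintype (H × H)).bind (linTestAnswers F)).toOuterMeasure
    {y | y.1 + y.2.1 = y.2.2}ᶜ
  set e := correctorPointsEquiv hXY (fun h => hY (left_eq_add.1 h)) (fun h => hX (right_eq_add.1 h))
  have hE : ∀ ψ : H × H × H → H × H, (uniformOfFintype _).map ψ = uniformOfFintype _ →
      ∑' RW, uniformOfFintype _ RW * linTestFail F (ψ (e RW)) = T := fun ψ hψ =>
    tsum_uniformOfFintype_mul_linTestFail F (φ := ψ ∘ e)
      (by rw [← map_comp, map_uniformOfFintype_equiv, hψ])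
  rw [selfCorrect_eq_bind, toOuterMeasure_bind_apply]
  refine (ENNReal.tsum_le_tsum fun RW => mul_le_mul_right
    (hns.toOuterMeasure_map_correctorAnswers_compl_le (S := {X, Y, X + Y}) RW hk card_le_three
      ⟨X, by simp⟩ ⟨Y, by simp⟩ ⟨X + Y, by simp⟩ rfl) _).trans_eq ?_
  simp only [mul_add, ENNReal.tsum_add]
  rw [show 4 * T = T + T + T + T by ring]
  congr 1
  congr 1
  congr 1
  · exact hE (fun h => (h.1, h.2.1)) (by simpa using map_uniformOfFintype_add_add (H := H) 0 0)
  · exact hE (fun h => (h.1 + Fin.append X 0, h.2.1 + Fin.append Y 0))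
      (map_uniformOfFintype_add_add _ _)
  · exact hE (fun h => (h.1 + h.2.1, h.2.2 + Fin.append (X + Y) 0))
      (by simpa using map_uniformOfFintype_add_add_add (H := H) 0 0 _)
  · exact hE (fun h => (h.1 + Fin.append X 0 + (h.2.1 + Fin.append Y 0), h.2.2))
      (by simpa using map_uniformOfFintype_add_add_add (H := H) _ _ 0)

end SelfCorrection

/-- if a `2t`-repeated `k`-non-signaling function (`k ≥ 7`) passes the
linearity test with probability at least `1-ε`, then its self-correction is
`(1-4ε)`-linear: for every `X, Y`, querying it on `{X, Y, X+Y}`, with probability at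
least `1-4ε` it holds that `F̂(X) + F̂(Y) = F̂(X+Y)`. -/
theorem selfCorrect_linear {n t k : ℕ} (ε : ℝ) (F : NSFam n (t + t))
    (hns : IsNonSignaling k F) (hk : 7 ≤ k)
    (hlin : linTestAccept F ≥ 1 - ε) :
    ∀ X Y : Fin t → Fin n → ZMod 2,
      prob (selfCorrect F {X, Y, X + Y})
        {f | ∀ j : Fin t, f ⟨X, by simp⟩ j + f ⟨Y, by simp⟩ j = f ⟨X + Y, by simp⟩ j}
        ≥ 1 - 4 * ε := by
  intro X Y
  set test := (uniformOfFintype _).bind (linTestAnswers F)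
  have hfail : prob test {y | y.1 + y.2.1 = y.2.2}ᶜ ≤ ε := by
    linarith [prob_add_prob_compl test {y | y.1 + y.2.1 = y.2.2},
      show prob test _ ≥ 1 - ε from hlin]
  by_cases hdeg : X = 0 ∨ Y = 0 ∨ X = Y
  · rw [prob_selfCorrect_eq_one_of_degenerate hdeg]
    linarith [show 0 ≤ prob test {y | y.1 + y.2.1 = y.2.2}ᶜ from ENNReal.toReal_nonneg]
  · obtain ⟨hX, hY, hXY⟩ : X ≠ 0 ∧ Y ≠ 0 ∧ X ≠ Y := by simpa only [not_or] using hdeg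
    have h := ENNReal.toReal_mono (ENNReal.mul_ne_top (by simp) (toOuterMeasure_ne_top _ _))
      (hns.toOuterMeasure_selfCorrect_compl_le hk hX hY hXY)
    rw [ENNReal.toReal_mul] at h
    linarith [prob_add_prob_compl (selfCorrect F {X, Y, X + Y})
      {f | ∀ j : Fin t, f ⟨X, by simp⟩ j + f ⟨Y, by simp⟩ j = f ⟨X + Y, by simp⟩ j},
      show prob _ _ ≤ 4 * prob test _ from h]
end
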